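/- arXiv:2203.09635 — 3 statements merged into one kernel-verified Lean document; each statement's English description precedes it below -/
import Mathlib

section
/- Let l1, l2, l3 > 0 and let n1, n2, n3 be positive integers with l1/n1 = l2/n2 = l3/n3 and n1 + n2 + n3 even. Set k = n1*π/l1 and define V1(x) = sin(k x), V2(x) = (-1)^{n1} sin(k x), V3(x) = -sin(k x). Then V1(0) = V3(0) = 0, V1(l1) = V2(0) = 0, V3(l3) = V2(l2) = 0, V1'(0) + V3'(0) = 0, V1'(l1) - V2'(0) = 0, V3'(l3) + V2'(l2) = 0, and none of V1, V2, V3 is identically zero (so these functions form a localized eigenvector of the generalized Laplacian supported on the triangle, with eigenvalue -k²). -/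
/-!
With `k = n₁π/l₁`, the common ratio `lⱼ/nⱼ` gives `k lⱼ = nⱼπ`, so `sin (k x)` vanishes at both
ends of every edge and its derivative at the far end is `(-1)^nⱼ` times that at the near end.
The signs `1, (-1)^n₁, -1` balance the fluxes at `a` and `b` outright; at `c` they balance because
`(-1)^(n₁ + n₂) = (-1)^n₃`, which is the parity condition.
-/

open Real

lemma mul_eq_nat_mul_pi_of_div_eq {l₁ l : ℝ} {n₁ n : ℕ} (hl₁ : l₁ ≠ 0) (hn₁ : n₁ ≠ 0)
    (hn : n ≠ 0) (h : l₁ / n₁ = l / n) : n₁ * π / l₁ * l = n * π := by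
  rw [div_eq_div_iff (by positivity) (by positivity)] at h
  rw [div_mul_eq_mul_div, div_eq_iff hl₁]
  linear_combination π * h.symm

lemma sin_mul_pi_div_two_mul {k : ℝ} (hk : k ≠ 0) : sin (k * (π / (2 * k))) = 1 := by
  rw [show k * (π / (2 * k)) = π / 2 by field_simp, sin_pi_div_two]

lemma deriv_sin_mul (k t : ℝ) : deriv (fun x => sin (k * x)) t = k * cos (k * t) := by
  simpa [mul_comm] using ((hasDerivAt_id t).const_mul k).sin.deriv

theorem triangle_localized_eigenvector_general
    (l1 l2 l3 : ℝ) (hl1 : 0 < l1)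
    (n1 n2 n3 : ℕ) (hn1 : 0 < n1) (hn2 : 0 < n2) (hn3 : 0 < n3)
    (h12 : l1 / (n1 : ℝ) = l2 / (n2 : ℝ))
    (h23 : l2 / (n2 : ℝ) = l3 / (n3 : ℝ))
    (heven : Even (n1 + n2 + n3)) :
    let k := (n1 : ℝ) * π / l1
    let V1 : ℝ → ℝ := fun x => Real.sin (k * x)
    let V2 : ℝ → ℝ := fun x => (-1 : ℝ) ^ n1 * Real.sin (k * x)
    let V3 : ℝ → ℝ := fun x => -Real.sin (k * x)
    V1 0 = 0 ∧ V3 0 = 0 ∧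
    V1 l1 = 0 ∧ V2 0 = 0 ∧
    V3 l3 = 0 ∧ V2 l2 = 0 ∧
    deriv V1 0 + deriv V3 0 = 0 ∧
    deriv V1 l1 - deriv V2 0 = 0 ∧
    deriv V3 l3 + deriv V2 l2 = 0 ∧
    V1 ≠ 0 ∧ V2 ≠ 0 ∧ V3 ≠ 0 := by
  intro k V1 V2 V3
  have hk : k ≠ 0 := by positivity
  have hkl1 : k * l1 = n1 * π := mul_eq_nat_mul_pi_of_div_eq hl1.ne' hn1.ne' hn1.ne' rfl
  have hkl2 : k * l2 = n2 * π := mul_eq_nat_mul_pi_of_div_eq hl1.ne' hn1.ne' hn2.ne' h12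
  have hkl3 : k * l3 = n3 * π :=
    mul_eq_nat_mul_pi_of_div_eq hl1.ne' hn1.ne' hn3.ne' (h12.trans h23)
  have hparity : (-1 : ℝ) ^ n1 * (-1) ^ n2 = (-1) ^ n3 := by
    rw [← pow_add]
    exact neg_one_pow_congr (Nat.even_add.mp heven)
  refine ⟨by simp [V1], by simp [V3], by simp [V1, hkl1], by simp [V2], by simp [V3, hkl3],
    by simp [V2, hkl2], ?_, ?_, ?_, ?_, ?_, ?_⟩
  · simp [V1, V3, deriv_sin_mul]
  · simp only [V1, V2, deriv_sin_mul, deriv_const_mul_field', hkl1, cos_nat_mul_pi, mul_zero,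
      cos_zero, mul_one]
    ring
  · simp only [V2, V3, deriv.fun_neg', deriv_sin_mul, deriv_const_mul_field', hkl2, hkl3,
      cos_nat_mul_pi]
    linear_combination k * hparity
  all_goals
    intro h
    simpa [V1, V2, V3, sin_mul_pi_div_two_mul hk] using congrFun h (π / (2 * k))

/-- A localized eigenvector exists on a triangle 1-2-3 embedded in a metric graph
when the resonance conditions on the lengths hold. -/
theorem triangle_localized_eigenvector
    (l1 l2 l3 : ℝ) (hl1 : 0 < l1) (hl2 : 0 < l2) (hl3 : 0 < l3)
    (n1 n2 n3 : ℕ) (hn1 : 0 < n1) (hn2 : 0 < n2) (hn3 : 0 < n3)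
    (h12 : l1 / (n1 : ℝ) = l2 / (n2 : ℝ))
    (h23 : l2 / (n2 : ℝ) = l3 / (n3 : ℝ))
    (heven : Even (n1 + n2 + n3)) :
    let k := (n1 : ℝ) * π / l1
    let V1 : ℝ → ℝ := fun x => Real.sin (k * x)
    let V2 : ℝ → ℝ := fun x => (-1 : ℝ) ^ n1 * Real.sin (k * x)
    let V3 : ℝ → ℝ := fun x => -Real.sin (k * x)
    V1 0 = 0 ∧ V3 0 = 0 ∧
    V1 l1 = 0 ∧ V2 0 = 0 ∧
    V3 l3 = 0 ∧ V2 l2 = 0 ∧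
    deriv V1 0 + deriv V3 0 = 0 ∧
    deriv V1 l1 - deriv V2 0 = 0 ∧
    deriv V3 l3 + deriv V2 l2 = 0 ∧
    V1 ≠ 0 ∧ V2 ≠ 0 ∧ V3 ≠ 0 :=
  triangle_localized_eigenvector_general l1 l2 l3 hl1 n1 n2 n3 hn1 hn2 hn3 h12 h23 heven
end

section
/- Let k > 0, l1, l2, l3 > 0 and real coefficients A_j, B_j (j = 1,2,3), not all zero, and set V_j(x) = A_j sin(k x) + B_j cos(k x). Suppose V1(0) = V3(0) = 0, V1(l1) = V2(0) = 0, V3(l3) = V2(l2) = 0, V1'(0) + V3'(0) = 0, V1'(l1) - V2'(0) = 0, and V3'(l3) + V2'(l2) = 0. Then there exist positive integers n1, n2, n3 such that k l_j = n_j π for j = 1,2,3, the sum n1 + n2 + n3 is even, and B1 = B2 = B3 = 0, A1 ≠ 0, A3 = -A1, A2 = (-1)^{n1} A1. In particular l1/n1 = l2/n2 = l3/n3. -/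
/-!
The vertex conditions at `a` and `b` and the first Kirchhoff condition force every cosine
coefficient to vanish and `A₃ = -A₁`, `A₂ = (-1)^{n₁} A₁` once `k l₁ = n₁ π`. A sine mode
`A sin (k x)` with `A ≠ 0` vanishes at `x = l > 0` only if `k l = n π`, `n ≥ 1`, and its slope
there is `(-1)^n` times its slope at `0`. The Kirchhoff condition at `c` then reads
`(-1)^{n₁ + n₂} = (-1)^{n₃}`, i.e. `n₁ + n₂ + n₃` is even.
-/

open Real

noncomputable section

def helmholtzMode (k A B : ℝ) : ℝ → ℝ := fun x => A * sin (k * x) + B * cos (k * x)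

@[simp]
lemma helmholtzMode_zero (k A B : ℝ) : helmholtzMode k A B 0 = B := by
  simp [helmholtzMode]

lemma hasDerivAt_helmholtzMode (k A B t : ℝ) :
    HasDerivAt (helmholtzMode k A B) (k * (A * cos (k * t) - B * sin (k * t))) t := by
  have hkx : HasDerivAt (fun x : ℝ => k * x) k t := by
    simpa using (hasDerivAt_id t).const_mul k
  exact ((((hasDerivAt_sin (k * t)).comp t hkx).const_mul A).add
    (((hasDerivAt_cos (k * t)).comp t hkx).const_mul B)).congr_deriv (by ring)

lemma deriv_helmholtzMode (k A B t : ℝ) :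
    deriv (helmholtzMode k A B) t = k * (A * cos (k * t) - B * sin (k * t)) :=
  (hasDerivAt_helmholtzMode k A B t).deriv

lemma deriv_helmholtzMode_sine_zero (k A : ℝ) : deriv (helmholtzMode k A 0) 0 = k * A := by
  simp [deriv_helmholtzMode]

lemma exists_pos_nat_mul_pi_of_sin_eq_zero {x : ℝ} (hx : 0 < x) (h : sin x = 0) :
    ∃ n : ℕ, 0 < n ∧ x = n * π := by
  obtain ⟨m, rfl⟩ := sin_eq_zero_iff.mp h
  have hm : 0 < m := by exact_mod_cast pos_of_mul_pos_left hx pi_pos.le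
  exact ⟨m.toNat, by omega, by rw [← Int.toNat_of_nonneg hm.le]; rfl⟩

lemma helmholtzMode_sine_resonance {k l A : ℝ} (hk : 0 < k) (hl : 0 < l) (hA : A ≠ 0)
    (h : helmholtzMode k A 0 l = 0) :
    ∃ n : ℕ, 0 < n ∧ k * l = n * π ∧ deriv (helmholtzMode k A 0) l = (-1) ^ n * (k * A) := by
  have hsin : sin (k * l) = 0 := by
    simpa [helmholtzMode, hA] using h
  obtain ⟨n, hn, hkl⟩ := exists_pos_nat_mul_pi_of_sin_eq_zero (mul_pos hk hl) hsin
  refine ⟨n, hn, hkl, ?_⟩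
  rw [deriv_helmholtzMode, hkl, cos_nat_mul_pi]
  ring

lemma div_nat_eq_pi_div {k l : ℝ} {n : ℕ} (hk : k ≠ 0) (hn : 0 < n) (h : k * l = n * π) :
    l / n = π / k := by
  have hn' : (n : ℝ) ≠ 0 := by exact_mod_cast hn.ne'
  rw [div_eq_div_iff hn' hk]
  linear_combination h

lemma even_add_add_of_neg_one_pow_mul_eq {a b c : ℕ}
    (h : (-1 : ℝ) ^ a * (-1) ^ b = (-1) ^ c) : Even (a + b + c) := by
  rw [← neg_one_pow_eq_one_iff_even (R := ℝ) (by norm_num), pow_add, pow_add, h, ← pow_add,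
    Even.neg_one_pow ⟨c, rfl⟩]

end

/-- Converse for the triangle: any nontrivial Helmholtz mode localized on a
triangle 1-2-3 forces the resonance conditions. -/
theorem triangle_localized_eigenvector_necessary
    (k l1 l2 l3 : ℝ) (hk : 0 < k) (hl1 : 0 < l1) (hl2 : 0 < l2) (hl3 : 0 < l3)
    (A1 B1 A2 B2 A3 B3 : ℝ)
    (hne : ¬(A1 = 0 ∧ B1 = 0 ∧ A2 = 0 ∧ B2 = 0 ∧ A3 = 0 ∧ B3 = 0))
    (V1 V2 V3 : ℝ → ℝ)
    (hV1 : V1 = fun x => A1 * Real.sin (k * x) + B1 * Real.cos (k * x))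
    (hV2 : V2 = fun x => A2 * Real.sin (k * x) + B2 * Real.cos (k * x))
    (hV3 : V3 = fun x => A3 * Real.sin (k * x) + B3 * Real.cos (k * x))
    (h1 : V1 0 = 0) (h2 : V3 0 = 0)
    (h3 : V1 l1 = 0) (h4 : V2 0 = 0)
    (h5 : V3 l3 = 0) (h6 : V2 l2 = 0)
    (h7 : deriv V1 0 + deriv V3 0 = 0)
    (h8 : deriv V1 l1 - deriv V2 0 = 0)
    (h9 : deriv V3 l3 + deriv V2 l2 = 0) :
    ∃ n1 n2 n3 : ℕ, 0 < n1 ∧ 0 < n2 ∧ 0 < n3 ∧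
      k * l1 = (n1 : ℝ) * π ∧ k * l2 = (n2 : ℝ) * π ∧ k * l3 = (n3 : ℝ) * π ∧
      Even (n1 + n2 + n3) ∧
      B1 = 0 ∧ B2 = 0 ∧ B3 = 0 ∧
      A1 ≠ 0 ∧ A3 = -A1 ∧ A2 = (-1 : ℝ) ^ n1 * A1 ∧
      l1 / (n1 : ℝ) = l2 / (n2 : ℝ) ∧ l2 / (n2 : ℝ) = l3 / (n3 : ℝ) := by
  change V1 = helmholtzMode k A1 B1 at hV1
  change V2 = helmholtzMode k A2 B2 at hV2
  change V3 = helmholtzMode k A3 B3 at hV3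
  subst hV1 hV2 hV3
  obtain rfl : B1 = 0 := by simpa using h1
  obtain rfl : B2 = 0 := by simpa using h4
  obtain rfl : B3 = 0 := by simpa using h2
  rw [deriv_helmholtzMode_sine_zero, deriv_helmholtzMode_sine_zero] at h7
  rw [deriv_helmholtzMode_sine_zero] at h8
  have hA3 : A3 = -A1 := mul_left_cancel₀ hk.ne' (by linear_combination h7)
  have hA1 : A1 ≠ 0 := by
    rintro rfl
    have hA2 : k * A2 = 0 := by simpa [deriv_helmholtzMode] using h8
    exact hne ⟨rfl, rfl, (mul_eq_zero.mp hA2).resolve_left hk.ne', rfl, by simpa using hA3, rfl⟩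
  obtain ⟨n1, hn1, hkl1, hd1⟩ := helmholtzMode_sine_resonance hk hl1 hA1 h3
  have hA2 : A2 = (-1) ^ n1 * A1 := by
    rw [hd1] at h8
    exact (mul_left_cancel₀ hk.ne' (by linear_combination h8)).symm
  obtain ⟨n2, hn2, hkl2, hd2⟩ :=
    helmholtzMode_sine_resonance hk hl2 (hA2 ▸ mul_ne_zero (by simp) hA1) h6
  obtain ⟨n3, hn3, hkl3, hd3⟩ := helmholtzMode_sine_resonance hk hl3 (hA3 ▸ neg_ne_zero.mpr hA1) h5
  rw [hd2, hd3, hA2, hA3] at h9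
  have hsign : (-1 : ℝ) ^ n1 * (-1) ^ n2 = (-1) ^ n3 :=
    mul_right_cancel₀ (mul_ne_zero hk.ne' hA1) (by linear_combination h9)
  refine ⟨n1, n2, n3, hn1, hn2, hn3, hkl1, hkl2, hkl3, even_add_add_of_neg_one_pow_mul_eq hsign,
    rfl, rfl, rfl, hA1, hA3, hA2, ?_, ?_⟩
  · rw [div_nat_eq_pi_div hk.ne' hn1 hkl1, div_nat_eq_pi_div hk.ne' hn2 hkl2]
  · rw [div_nat_eq_pi_div hk.ne' hn2 hkl2, div_nat_eq_pi_div hk.ne' hn3 hkl3]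
end

section
/- Let l1, l2, l3, l4 > 0 and let n1, n2, n3, n4 be positive integers with l1/n1 = l2/n2 = l3/n3 = l4/n4 and n1 + n2 + n3 + n4 even. Set k = n1*π/l1, ε_1 = 1, ε_{j+1} = (-1)^{n_j} ε_j for j = 1,2,3, and define V_j(x) = ε_j sin(k x) for j = 1,...,4. Then V_j(0) = V_j(l_j) = 0 for all j and V_j'(l_j) = V_{j+1}'(0) for j = 1,2,3,4 (indices cyclic mod 4), and none of the V_j is identically zero (a localized eigenvector on the quadrilateral with eigenvalue -k²). -/
/-!
The resonance condition gives `k * l_j = n_j * π` on every edge, so `sin (k x)` vanishes at both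
ends of each edge and its slope at `x = l_j` is `(-1) ^ n_j` times its slope at `0`. The signs
`ε_j` absorb this factor edge by edge, and going once around the cycle the accumulated factor
`(-1) ^ (n1 + n2 + n3 + n4)` is `1` by parity.
-/

open Real

lemma nat_mul_pi_div_mul_of_div_eq {l₀ l : ℝ} {n₀ n : ℕ} (hl₀ : l₀ ≠ 0) (hn₀ : n₀ ≠ 0)
    (hn : n ≠ 0) (h : l₀ / n₀ = l / n) : n₀ * π / l₀ * l = n * π := by
  have hn₀' : (n₀ : ℝ) ≠ 0 := Nat.cast_ne_zero.mpr hn₀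
  have hn' : (n : ℝ) ≠ 0 := Nat.cast_ne_zero.mpr hn
  rw [div_eq_div_iff hn₀' hn'] at h
  field_simp
  linear_combination -h

section SineMode

variable (ε k : ℝ)

lemma deriv_const_mul_sin_mul (x : ℝ) :
    deriv (fun x => ε * sin (k * x)) x = ε * k * cos (k * x) := by
  have h : HasDerivAt (fun x => ε * sin (k * x)) (ε * (cos (k * x) * (k * 1))) x :=
    ((hasDerivAt_sin (k * x)).comp x ((hasDerivAt_id x).const_mul k)).const_mul ε
  rw [h.deriv]
  ring

lemma const_mul_sin_mul_eq_zero {l : ℝ} {n : ℕ} (h : k * l = n * π) :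
    ε * sin (k * l) = 0 := by
  rw [h, sin_nat_mul_pi, mul_zero]

lemma deriv_const_mul_sin_mul_of_eq_nat_mul_pi {l : ℝ} {n : ℕ} (h : k * l = n * π) :
    deriv (fun x => ε * sin (k * x)) l = (-1) ^ n * ε * k := by
  rw [deriv_const_mul_sin_mul, h, cos_nat_mul_pi]
  ring

lemma deriv_const_mul_sin_mul_zero : deriv (fun x => ε * sin (k * x)) 0 = ε * k := by
  rw [deriv_const_mul_sin_mul, mul_zero, cos_zero, mul_one]

variable {ε k}

lemma const_mul_sin_mul_ne_zero (hε : ε ≠ 0) (hk : k ≠ 0) :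
    (fun x => ε * sin (k * x)) ≠ 0 := by
  intro h
  have h₀ := congrFun h (π / 2 / k)
  rw [Pi.zero_apply, mul_div_cancel₀ _ hk, sin_pi_div_two, mul_one] at h₀
  exact hε h₀

end SineMode

theorem quadrilateral_localized_eigenvector_general
    (l1 l2 l3 l4 : ℝ) (hl1 : 0 < l1)
    (n1 n2 n3 n4 : ℕ) (hn1 : 0 < n1) (hn2 : 0 < n2) (hn3 : 0 < n3) (hn4 : 0 < n4)
    (h12 : l1 / (n1 : ℝ) = l2 / (n2 : ℝ))
    (h23 : l2 / (n2 : ℝ) = l3 / (n3 : ℝ))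
    (h34 : l3 / (n3 : ℝ) = l4 / (n4 : ℝ))
    (heven : Even (n1 + n2 + n3 + n4)) :
    let k := (n1 : ℝ) * π / l1
    let ε1 : ℝ := 1
    let ε2 : ℝ := (-1 : ℝ) ^ n1 * ε1
    let ε3 : ℝ := (-1 : ℝ) ^ n2 * ε2
    let ε4 : ℝ := (-1 : ℝ) ^ n3 * ε3
    let V1 : ℝ → ℝ := fun x => ε1 * Real.sin (k * x)
    let V2 : ℝ → ℝ := fun x => ε2 * Real.sin (k * x)
    let V3 : ℝ → ℝ := fun x => ε3 * Real.sin (k * x)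
    let V4 : ℝ → ℝ := fun x => ε4 * Real.sin (k * x)
    (V1 0 = 0 ∧ V1 l1 = 0) ∧ (V2 0 = 0 ∧ V2 l2 = 0) ∧
    (V3 0 = 0 ∧ V3 l3 = 0) ∧ (V4 0 = 0 ∧ V4 l4 = 0) ∧
    deriv V1 l1 = deriv V2 0 ∧
    deriv V2 l2 = deriv V3 0 ∧
    deriv V3 l3 = deriv V4 0 ∧
    deriv V4 l4 = deriv V1 0 ∧
    V1 ≠ 0 ∧ V2 ≠ 0 ∧ V3 ≠ 0 ∧ V4 ≠ 0 := by
  intro k ε1 ε2 ε3 ε4 V1 V2 V3 V4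
  have hk {l : ℝ} {n : ℕ} (hn : 0 < n) (h : l1 / n1 = l / n) : k * l = n * π :=
    nat_mul_pi_div_mul_of_div_eq hl1.ne' hn1.ne' hn.ne' h
  have hk1 := hk hn1 rfl
  have hk2 := hk hn2 h12
  have hk3 := hk hn3 (h12.trans h23)
  have hk4 := hk hn4 ((h12.trans h23).trans h34)
  have hk0 : k ≠ 0 := by positivity
  have hε {ε : ℝ} (hε : ε ≠ 0) (n : ℕ) : (-1 : ℝ) ^ n * ε ≠ 0 := by simpa using hε
  have hε1 : ε1 ≠ 0 := one_ne_zero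
  have hε2 : ε2 ≠ 0 := hε hε1 n1
  have hε3 : ε3 ≠ 0 := hε hε2 n2
  have hε4 : ε4 ≠ 0 := hε hε3 n3
  have hcycle : (-1 : ℝ) ^ n4 * ε4 = ε1 :=
    calc (-1 : ℝ) ^ n4 * ε4 = (-1) ^ (n1 + n2 + n3 + n4) := by simp only [ε4, ε3, ε2, ε1]; ring
      _ = ε1 := heven.neg_one_pow
  refine ⟨⟨by simp [V1], const_mul_sin_mul_eq_zero _ _ hk1⟩,
    ⟨by simp [V2], const_mul_sin_mul_eq_zero _ _ hk2⟩,
    ⟨by simp [V3], const_mul_sin_mul_eq_zero _ _ hk3⟩,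
    ⟨by simp [V4], const_mul_sin_mul_eq_zero _ _ hk4⟩, ?_, ?_, ?_, ?_,
    const_mul_sin_mul_ne_zero hε1 hk0, const_mul_sin_mul_ne_zero hε2 hk0,
    const_mul_sin_mul_ne_zero hε3 hk0, const_mul_sin_mul_ne_zero hε4 hk0⟩ <;>
  simp only [V1, V2, V3, V4, deriv_const_mul_sin_mul_of_eq_nat_mul_pi _ _ hk1,
    deriv_const_mul_sin_mul_of_eq_nat_mul_pi _ _ hk2,
    deriv_const_mul_sin_mul_of_eq_nat_mul_pi _ _ hk3,
    deriv_const_mul_sin_mul_of_eq_nat_mul_pi _ _ hk4, deriv_const_mul_sin_mul_zero, hcycle] <;> rfl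

/-- A localized eigenvector exists on a quadrilateral 1-2-3-4 embedded in a metric
graph when the resonance conditions on the lengths hold. -/
theorem quadrilateral_localized_eigenvector
    (l1 l2 l3 l4 : ℝ) (hl1 : 0 < l1) (hl2 : 0 < l2) (hl3 : 0 < l3) (hl4 : 0 < l4)
    (n1 n2 n3 n4 : ℕ) (hn1 : 0 < n1) (hn2 : 0 < n2) (hn3 : 0 < n3) (hn4 : 0 < n4)
    (h12 : l1 / (n1 : ℝ) = l2 / (n2 : ℝ))
    (h23 : l2 / (n2 : ℝ) = l3 / (n3 : ℝ))
    (h34 : l3 / (n3 : ℝ) = l4 / (n4 : ℝ))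
    (heven : Even (n1 + n2 + n3 + n4)) :
    let k := (n1 : ℝ) * π / l1
    let ε1 : ℝ := 1
    let ε2 : ℝ := (-1 : ℝ) ^ n1 * ε1
    let ε3 : ℝ := (-1 : ℝ) ^ n2 * ε2
    let ε4 : ℝ := (-1 : ℝ) ^ n3 * ε3
    let V1 : ℝ → ℝ := fun x => ε1 * Real.sin (k * x)
    let V2 : ℝ → ℝ := fun x => ε2 * Real.sin (k * x)
    let V3 : ℝ → ℝ := fun x => ε3 * Real.sin (k * x)
    let V4 : ℝ → ℝ := fun x => ε4 * Real.sin (k * x)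
    (V1 0 = 0 ∧ V1 l1 = 0) ∧ (V2 0 = 0 ∧ V2 l2 = 0) ∧
    (V3 0 = 0 ∧ V3 l3 = 0) ∧ (V4 0 = 0 ∧ V4 l4 = 0) ∧
    deriv V1 l1 = deriv V2 0 ∧
    deriv V2 l2 = deriv V3 0 ∧
    deriv V3 l3 = deriv V4 0 ∧
    deriv V4 l4 = deriv V1 0 ∧
    V1 ≠ 0 ∧ V2 ≠ 0 ∧ V3 ≠ 0 ∧ V4 ≠ 0 :=
  quadrilateral_localized_eigenvector_general l1 l2 l3 l4 hl1 n1 n2 n3 n4 hn1 hn2 hn3 hn4 h12 h23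
    h34 heven
end
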